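/- Lemma 2, Eq. (22): let b be the parent of a non-root node a, with edge resistance r_{ab} and reactance x_{ab}. Then W_θ(a,b) = Σ_{c ∈ D_a} [x_{ab}² σp(c) + r_{ab}² σq(c) − 2 r_{ab} x_{ab} σpq(c)], i.e., the expected squared centered difference of voltage phase angles across an edge depends only on that edge's parameters and the injection statistics of the descendants of a. -/
import Mathlib


open Finset
open Classical

/-- A finite rooted tree, encoded by its root and parent map: every node reaches
the root by iterating `parent`, and the root is a fixed point of `parent`.
Each non-root node `v` is identified with the edge `(v, parent v)`, so that
edge weights are functions on non-root nodes. -/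
structure DistTree (V : Type) [Fintype V] [DecidableEq V] where
  root : V
  parent : V → V
  parent_root : parent root = root
  reaches_root : ∀ v : V, ∃ n : ℕ, parent^[n] v = root

namespace DistTree

variable {V : Type} [Fintype V] [DecidableEq V]

/-- `a` is a descendant of `b` (i.e. `a ∈ D_b`): `b` lies on the path from `a`
to the root.  Every node is a descendant of itself. -/
def Desc (T : DistTree V) (a b : V) : Prop := ∃ n : ℕ, T.parent^[n] a = b

/-- `b` is the parent of the (non-root) node `a`: `(a,b)` is an edge of the tree
and `b` lies on the path from `a` to the root. -/
def IsParent (T : DistTree V) (b a : V) : Prop := a ≠ T.root ∧ T.parent a = b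

/-- `T.pathSum w a b = Σ_{e ∈ P(a) ∩ P(b)} w_e` : the sum of the edge weights `w`
over the edges common to the path from `a` to the root and the path from `b` to
the root.  An edge `(v, parent v)` (indexed by the non-root node `v`) lies on
`P(a)` iff `a` is a descendant of `v`. -/
noncomputable def pathSum (T : DistTree V) (w : V → ℝ) (a b : V) : ℝ :=
  ∑ v : V, if v ≠ T.root ∧ T.Desc a v ∧ T.Desc b v then w v else 0

end DistTree

/-- `W_ε(a,b) := Σ_{c ≠ 0} [(R(a,c)−R(b,c))² σp(c) + (X(a,c)−X(b,c))² σq(c)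
+ 2 (R(a,c)−R(b,c)) (X(a,c)−X(b,c)) σpq(c)]`: the expected squared centered
difference of voltage-magnitude deviations between `a` and `b` (LC-PF model). -/
noncomputable def Weps {V : Type} [Fintype V] [DecidableEq V]
    (T : DistTree V) (r x σp σq σpq : V → ℝ) (a b : V) : ℝ :=
  ∑ c : V, if c ≠ T.root then
      (T.pathSum r a c - T.pathSum r b c) ^ 2 * σp c
        + (T.pathSum x a c - T.pathSum x b c) ^ 2 * σq c
        + 2 * (T.pathSum r a c - T.pathSum r b c)
            * (T.pathSum x a c - T.pathSum x b c) * σpq c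
    else 0

/-- `W_θ(a,b) := Σ_{c ≠ 0} [(X(a,c)−X(b,c))² σp(c) + (R(a,c)−R(b,c))² σq(c)
− 2 (R(a,c)−R(b,c)) (X(a,c)−X(b,c)) σpq(c)]`: the expected squared centered
difference of voltage phase angles between `a` and `b` (LC-PF model). -/
noncomputable def Wtheta {V : Type} [Fintype V] [DecidableEq V]
    (T : DistTree V) (r x σp σq σpq : V → ℝ) (a b : V) : ℝ :=
  ∑ c : V, if c ≠ T.root then
      (T.pathSum x a c - T.pathSum x b c) ^ 2 * σp c
        + (T.pathSum r a c - T.pathSum r b c) ^ 2 * σq c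
        - 2 * (T.pathSum r a c - T.pathSum r b c)
            * (T.pathSum x a c - T.pathSum x b c) * σpq c
    else 0

/-- `W_{εθ}(a,b) := Σ_{c ≠ 0} [(R(a,c)−R(b,c)) (X(a,c)−X(b,c)) (σp(c) − σq(c))
+ ((X(a,c)−X(b,c))² − (R(a,c)−R(b,c))²) σpq(c)]`: the expected product of the
centered differences of voltage-magnitude deviations and phase angles between
`a` and `b` (LC-PF model). -/
noncomputable def WepsTheta {V : Type} [Fintype V] [DecidableEq V]
    (T : DistTree V) (r x σp σq σpq : V → ℝ) (a b : V) : ℝ :=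
  ∑ c : V, if c ≠ T.root then
      (T.pathSum r a c - T.pathSum r b c) * (T.pathSum x a c - T.pathSum x b c)
          * (σp c - σq c)
        + ((T.pathSum x a c - T.pathSum x b c) ^ 2
            - (T.pathSum r a c - T.pathSum r b c) ^ 2) * σpq c
    else 0

namespace DistTree

variable {V : Type} [Fintype V] [DecidableEq V]

lemma desc_root_imp (T : DistTree V) {a : V} (h : T.Desc T.root a) : a = T.root := by
  obtain ⟨n, hn⟩ := h
  rw [Function.iterate_fixed T.parent_root] at hn
  exact hn.symm

lemma desc_parent_iff (T : DistTree V) {a b : V} (hab : T.IsParent b a) (v : V) :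
    T.Desc a v ↔ v = a ∨ T.Desc b v := by
  constructor
  · rintro ⟨n, hn⟩
    cases n with
    | zero => exact Or.inl hn.symm
    | succ m =>
      right
      rw [Function.iterate_succ_apply, hab.2] at hn
      exact ⟨m, hn⟩
  · rintro (rfl | ⟨n, hn⟩)
    · exact ⟨0, rfl⟩
    · exact ⟨n + 1, by rw [Function.iterate_succ_apply, hab.2]; exact hn⟩

lemma not_desc_parent (T : DistTree V) {a b : V} (hab : T.IsParent b a) :
    ¬ T.Desc b a := by
  rintro ⟨n, hn⟩
  have hcyc : T.parent^[n + 1] a = a := by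
    rw [Function.iterate_succ_apply, hab.2]; exact hn
  have hmul : ∀ m : ℕ, T.parent^[(n + 1) * m] a = a := by
    intro m
    induction m with
    | zero => simp
    | succ k ih =>
      rw [Nat.mul_succ, Function.iterate_add_apply, hcyc, ih]
  obtain ⟨N, hN⟩ := T.reaches_root a
  have hk : ∀ k, T.parent^[N + k] a = T.root := by
    intro k
    rw [add_comm, Function.iterate_add_apply, hN,
      Function.iterate_fixed T.parent_root]
  have : T.parent^[(n + 1) * (N + 1)] a = T.root := by
    have hle : N ≤ (n + 1) * (N + 1) := by nlinarith
    obtain ⟨k, hk'⟩ := Nat.exists_eq_add_of_le hle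
    rw [hk', hk]
  rw [hmul] at this
  exact hab.1 this

lemma pathSum_sub (T : DistTree V) (w : V → ℝ) {a b : V} (hab : T.IsParent b a)
    (c : V) :
    T.pathSum w a c - T.pathSum w b c = if T.Desc c a then w a else 0 := by
  unfold pathSum
  rw [← Finset.sum_sub_distrib,
    Finset.sum_eq_single a (fun v _ hv => ?_) (by simp)]
  · have h1 : T.Desc a a := ⟨0, rfl⟩
    have h2 : ¬ T.Desc b a := T.not_desc_parent hab
    simp [h1, h2, hab.1]
  · have : T.Desc a v ↔ T.Desc b v := by
      rw [T.desc_parent_iff hab]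
      simp [hv]
    rw [this, sub_self]

end DistTree

/-- **Lemma 2, Eq. (22).** If `b` is the parent of the non-root node
`a`, with edge resistance `r_{ab}` and reactance `x_{ab}`, then
`W_θ(a,b) = Σ_{c ∈ D_a} [x_{ab}² σp(c) + r_{ab}² σq(c) − 2 r_{ab} x_{ab} σpq(c)]`. -/
theorem Wtheta_parent_edge {V : Type} [Fintype V] [DecidableEq V]
    (T : DistTree V) (r x σp σq σpq : V → ℝ)
    (hr : ∀ v, v ≠ T.root → 0 < r v) (hx : ∀ v, v ≠ T.root → 0 < x v)
    (hσp : ∀ v, v ≠ T.root → 0 < σp v) (hσq : ∀ v, v ≠ T.root → 0 < σq v)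
    (hσpq : ∀ v, v ≠ T.root → 0 < σpq v)
    (a b : V) (hab : T.IsParent b a) :
    Wtheta T r x σp σq σpq a b =
      ∑ c : V, if T.Desc c a then
          (x a) ^ 2 * σp c + (r a) ^ 2 * σq c - 2 * r a * x a * σpq c
        else 0 := by
  unfold Wtheta
  refine Finset.sum_congr rfl fun c _ => ?_
  by_cases hc : c ≠ T.root
  · rw [if_pos hc, T.pathSum_sub r hab c, T.pathSum_sub x hab c]
    by_cases hd : T.Desc c a <;> simp [hd]
  · push_neg at hc
    subst hc
    have : ¬ T.Desc T.root a := fun h => hab.1 (T.desc_root_imp h)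
    simp [this]
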